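/- arXiv:2001.01436 — 8 statements merged into one kernel-verified Lean document; each statement's English description precedes it below -/
import Mathlib

section
/- For all vectors ξ, ζ in ℂⁿ and p ∈ (1, ∞), there exist constants c, C > 0 depending only on p and n such that c (|ξ| + |ζ|)^{p-2} |ξ − ζ|² ≤ Re[(|ξ|^{p-2} ξ − |ζ|^{p-2} ζ) · (conj(ξ) − conj(ζ))] ≤ C (|ξ| + |ζ|)^{p-2} |ξ − ζ|². -/
/-!
Write `s = ‖ξ‖`, `t = ‖ζ‖`, `r = Re ⟪ξ, ζ⟫`. Both the middle term
`s^(p-2) s² + t^(p-2) t² - (s^(p-2) + t^(p-2)) r` and `‖ξ - ζ‖² = s² + t² - 2r` are affine in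
`r ∈ [-st, st]`, so it suffices to prove the bounds at `r = ± st`, i.e. to compare
`(s^q ∓ t^q)(s ∓ t)` with `(s + t)^(q-1) (s ∓ t)²` for `q = p - 1 > 0`. At `r = -st` this is the
comparability of `s^q + t^q` with `(s + t)^q`. At `r = st`, for `t ≤ s`, Bernoulli's inequality
applied to `t / s` gives `s^q - t^q ≍ s^(q-1) (s - t)`, and `s ≤ s + t ≤ 2s` gives
`s^(q-1) ≍ (s + t)^(q-1)`.
-/

open scoped InnerProductSpace

namespace Real

lemma rpow_sub_one_mul_self {x q : ℝ} (hx : 0 ≤ x) (hq : q ≠ 0) : x ^ (q - 1) * x = x ^ q := by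
  conv_rhs => rw [← sub_add_cancel q 1, rpow_add' hx (by simpa), rpow_one]

lemma one_sub_rpow_bounds {q x : ℝ} (hq : 0 < q) (hx : 0 ≤ x) (hx1 : x ≤ 1) :
    min 1 q * (1 - x) ≤ 1 - x ^ q ∧ 1 - x ^ q ≤ max 1 q * (1 - x) := by
  have hbern : -1 ≤ x - 1 := by linarith
  rcases le_total q 1 with hq1 | hq1
  · have := rpow_one_add_le_one_add_mul_self hbern hq.le hq1
    rw [add_sub_cancel] at this
    rw [min_eq_right hq1, max_eq_left hq1]
    exact ⟨by linarith, by linarith [self_le_rpow_of_le_one hx hx1 hq1]⟩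
  · have := one_add_mul_self_le_rpow_one_add hbern hq1
    rw [add_sub_cancel] at this
    rw [min_eq_left hq1, max_eq_right hq1]
    exact ⟨by linarith [rpow_le_self_of_le_one hx hx1 hq1], by linarith⟩

lemma rpow_sub_rpow_bounds {q s t : ℝ} (hq : 0 < q) (ht : 0 ≤ t) (hts : t ≤ s) :
    min 1 q * s ^ (q - 1) * (s - t) ≤ s ^ q - t ^ q ∧
      s ^ q - t ^ q ≤ max 1 q * s ^ (q - 1) * (s - t) := by
  obtain rfl | hs := (ht.trans hts).eq_or_lt
  · obtain rfl : t = 0 := le_antisymm hts ht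
    simp
  obtain ⟨h₁, h₂⟩ := one_sub_rpow_bounds hq (div_nonneg ht hs.le) ((div_le_one hs).2 hts)
  have hsq : 0 ≤ s ^ q := rpow_nonneg hs.le q
  have hdiff : s ^ q - t ^ q = s ^ q * (1 - (t / s) ^ q) := by
    rw [div_rpow ht hs.le]; field_simp
  have hlin : s ^ (q - 1) * (s - t) = s ^ q * (1 - t / s) := by
    rw [← rpow_sub_one_mul_self hs.le hq.ne']; field_simp
  rw [hdiff, mul_assoc, mul_assoc, hlin, mul_left_comm, mul_left_comm (max 1 q)]
  exact ⟨mul_le_mul_of_nonneg_left h₁ hsq, mul_le_mul_of_nonneg_left h₂ hsq⟩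

lemma two_rpow_neg_mul_add_rpow_le {q s t : ℝ} (hq : 0 ≤ q) (ht : 0 ≤ t) (hts : t ≤ s) :
    2 ^ (-q) * (s + t) ^ q ≤ s ^ q := by
  have : ((s + t) / 2) ^ q ≤ s ^ q := rpow_le_rpow (by linarith) (by linarith) hq
  rwa [div_rpow (by linarith) zero_le_two, div_eq_inv_mul, ← rpow_neg zero_le_two] at this

lemma rpow_sub_one_bounds {q s t : ℝ} (hq : 0 < q) (ht : 0 ≤ t) (hts : t ≤ s) (hs : 0 < s) :
    2 ^ (-q) * (s + t) ^ (q - 1) ≤ s ^ (q - 1) ∧ s ^ (q - 1) ≤ 2 * (s + t) ^ (q - 1) := by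
  have hst : 0 < s + t := by linarith
  have hs₁ := rpow_sub_one_mul_self hs.le hq.ne'
  have hst₁ := rpow_sub_one_mul_self hst.le hq.ne'
  constructor
  · refine le_of_mul_le_mul_right ?_ hs
    calc 2 ^ (-q) * (s + t) ^ (q - 1) * s = 2 ^ (-q) * ((s + t) ^ (q - 1) * s) := mul_assoc ..
      _ ≤ 2 ^ (-q) * ((s + t) ^ (q - 1) * (s + t)) := by gcongr; linarith
      _ ≤ s ^ (q - 1) * s := by rw [hst₁, hs₁]; exact two_rpow_neg_mul_add_rpow_le hq.le ht hts
  · refine le_of_mul_le_mul_right ?_ hst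
    calc s ^ (q - 1) * (s + t) ≤ 2 * (s ^ (q - 1) * s) := by nlinarith [rpow_nonneg hs.le (q - 1)]
      _ ≤ 2 * ((s + t) ^ (q - 1) * (s + t)) := by
          rw [hs₁, hst₁]; gcongr; linarith
      _ = 2 * (s + t) ^ (q - 1) * (s + t) := by ring

lemma rpow_sub_rpow_mul_sub_bounds {q s t : ℝ} (hq : 0 < q) (hs : 0 ≤ s) (ht : 0 ≤ t) :
    min 1 q * 2 ^ (-q) * ((s + t) ^ (q - 1) * (s - t) ^ 2) ≤ (s ^ q - t ^ q) * (s - t) ∧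
      (s ^ q - t ^ q) * (s - t) ≤ 2 * max 1 q * ((s + t) ^ (q - 1) * (s - t) ^ 2) := by
  wlog hts : t ≤ s generalizing s t
  · have h := this ht hs (le_of_not_ge hts)
    rwa [add_comm t, show (t ^ q - s ^ q) * (t - s) = (s ^ q - t ^ q) * (s - t) by ring,
      show (t - s) ^ 2 = (s - t) ^ 2 by ring] at h
  obtain rfl | hs := hs.eq_or_lt
  · obtain rfl : t = 0 := le_antisymm hts ht
    simp
  obtain ⟨h₁, h₂⟩ := rpow_sub_rpow_bounds hq ht hts
  obtain ⟨h₃, h₄⟩ := rpow_sub_one_bounds hq ht hts hs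
  have hd : 0 ≤ s - t := sub_nonneg.2 hts
  have hmin : 0 ≤ min 1 q := le_min zero_le_one hq.le
  have hmax : 0 ≤ max 1 q := zero_le_one.trans (le_max_left 1 q)
  constructor
  · calc min 1 q * 2 ^ (-q) * ((s + t) ^ (q - 1) * (s - t) ^ 2)
          = min 1 q * (2 ^ (-q) * (s + t) ^ (q - 1)) * (s - t) * (s - t) := by ring
      _ ≤ min 1 q * s ^ (q - 1) * (s - t) * (s - t) := by gcongr
      _ ≤ (s ^ q - t ^ q) * (s - t) := by gcongr
  · calc (s ^ q - t ^ q) * (s - t) ≤ max 1 q * s ^ (q - 1) * (s - t) * (s - t) := by gcongr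
      _ ≤ max 1 q * (2 * (s + t) ^ (q - 1)) * (s - t) * (s - t) := by gcongr
      _ = 2 * max 1 q * ((s + t) ^ (q - 1) * (s - t) ^ 2) := by ring

lemma rpow_add_rpow_mul_add_bounds {q s t : ℝ} (hq : 0 < q) (hs : 0 ≤ s) (ht : 0 ≤ t) :
    min 1 q * 2 ^ (-q) * ((s + t) ^ (q - 1) * (s + t) ^ 2) ≤ (s ^ q + t ^ q) * (s + t) ∧
      (s ^ q + t ^ q) * (s + t) ≤ 2 * max 1 q * ((s + t) ^ (q - 1) * (s + t) ^ 2) := by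
  wlog hts : t ≤ s generalizing s t
  · have h := this ht hs (le_of_not_ge hts)
    rwa [add_comm t, add_comm (t ^ q)] at h
  have hst : 0 ≤ s + t := by linarith
  have hW : (s + t) ^ (q - 1) * (s + t) ^ 2 = (s + t) ^ q * (s + t) := by
    rw [← rpow_sub_one_mul_self hst hq.ne']; ring
  have hlo : min 1 q * 2 ^ (-q) * (s + t) ^ q ≤ s ^ q + t ^ q := by
    have := mul_le_mul_of_nonneg_right (min_le_left 1 q)
      (by positivity : 0 ≤ 2 ^ (-q) * (s + t) ^ q)
    linarith [two_rpow_neg_mul_add_rpow_le hq.le ht hts, rpow_nonneg ht q]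
  have hup : s ^ q + t ^ q ≤ 2 * max 1 q * (s + t) ^ q := by
    have := mul_le_mul_of_nonneg_right (le_max_left 1 q) (rpow_nonneg hst q)
    linarith [rpow_le_rpow hs (by linarith : s ≤ s + t) hq.le,
      rpow_le_rpow ht (by linarith : t ≤ s + t) hq.le]
  rw [hW]
  exact ⟨by linarith [mul_le_mul_of_nonneg_right hlo hst],
    by linarith [mul_le_mul_of_nonneg_right hup hst]⟩

lemma sub_mul_nonneg_of_abs_le {a b m r : ℝ} (hr : |r| ≤ m) (hm : 0 ≤ a - b * m)
    (hm' : 0 ≤ a + b * m) : 0 ≤ a - b * r := by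
  rcases le_total 0 b with hb | hb
  · nlinarith [le_abs_self r]
  · nlinarith [neg_abs_le r]

theorem rpow_mul_sq_sub_bounds {q s t r : ℝ} (hq : 0 < q) (hs : 0 ≤ s) (ht : 0 ≤ t)
    (hr : |r| ≤ s * t) :
    min 1 q * 2 ^ (-q) * ((s + t) ^ (q - 1) * (s ^ 2 + t ^ 2 - 2 * r)) ≤
        s ^ (q - 1) * s ^ 2 + t ^ (q - 1) * t ^ 2 - (s ^ (q - 1) + t ^ (q - 1)) * r ∧
      s ^ (q - 1) * s ^ 2 + t ^ (q - 1) * t ^ 2 - (s ^ (q - 1) + t ^ (q - 1)) * r ≤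
        2 * max 1 q * ((s + t) ^ (q - 1) * (s ^ 2 + t ^ 2 - 2 * r)) := by
  have hs₁ := rpow_sub_one_mul_self hs hq.ne'
  have ht₁ := rpow_sub_one_mul_self ht hq.ne'
  obtain ⟨hA₁, hA₂⟩ := rpow_sub_rpow_mul_sub_bounds hq hs ht
  obtain ⟨hB₁, hB₂⟩ := rpow_add_rpow_mul_add_bounds hq hs ht
  have hF₁ : s ^ (q - 1) * s ^ 2 + t ^ (q - 1) * t ^ 2 - (s ^ (q - 1) + t ^ (q - 1)) * (s * t) =
      (s ^ q - t ^ q) * (s - t) := by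
    linear_combination (s - t) * hs₁ + (t - s) * ht₁
  have hF₂ : s ^ (q - 1) * s ^ 2 + t ^ (q - 1) * t ^ 2 + (s ^ (q - 1) + t ^ (q - 1)) * (s * t) =
      (s ^ q + t ^ q) * (s + t) := by
    linear_combination (s + t) * hs₁ + (s + t) * ht₁
  set W := (s + t) ^ (q - 1)
  constructor
  · have := sub_mul_nonneg_of_abs_le
      (a := s ^ (q - 1) * s ^ 2 + t ^ (q - 1) * t ^ 2 - min 1 q * 2 ^ (-q) * W * (s ^ 2 + t ^ 2))
      (b := s ^ (q - 1) + t ^ (q - 1) - 2 * (min 1 q * 2 ^ (-q) * W)) hr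
      (by linarith) (by linarith)
    linarith
  · have := sub_mul_nonneg_of_abs_le
      (a := 2 * max 1 q * W * (s ^ 2 + t ^ 2) - (s ^ (q - 1) * s ^ 2 + t ^ (q - 1) * t ^ 2))
      (b := 2 * (2 * max 1 q * W) - (s ^ (q - 1) + t ^ (q - 1))) hr
      (by linarith) (by linarith)
    linarith

end Real

section InnerProductSpace

open RCLike

variable {𝕜 E : Type*} [RCLike 𝕜] [NormedAddCommGroup E] [InnerProductSpace 𝕜 E]

lemma re_inner_sub_smul_sub_smul (x y : E) (a b : ℝ) :
    re ⟪x - y, (a : 𝕜) • x - (b : 𝕜) • y⟫_𝕜 =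
      a * ‖x‖ ^ 2 + b * ‖y‖ ^ 2 - (a + b) * re ⟪x, y⟫_𝕜 := by
  simp only [inner_sub_left, inner_sub_right, inner_smul_right, map_sub, re_ofReal_mul,
    inner_self_eq_norm_sq]
  rw [inner_re_symm y x]
  ring

theorem re_inner_rpow_smul_sub_bounds {p : ℝ} (hp : 1 < p) (x y : E) :
    min 1 (p - 1) * 2 ^ (1 - p) * (‖x‖ + ‖y‖) ^ (p - 2) * ‖x - y‖ ^ 2 ≤
        re ⟪x - y, ((‖x‖ ^ (p - 2) : ℝ) : 𝕜) • x - ((‖y‖ ^ (p - 2) : ℝ) : 𝕜) • y⟫_𝕜 ∧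
      re ⟪x - y, ((‖x‖ ^ (p - 2) : ℝ) : 𝕜) • x - ((‖y‖ ^ (p - 2) : ℝ) : 𝕜) • y⟫_𝕜 ≤
        2 * max 1 (p - 1) * (‖x‖ + ‖y‖) ^ (p - 2) * ‖x - y‖ ^ 2 := by
  have hr : |re ⟪x, y⟫_𝕜| ≤ ‖x‖ * ‖y‖ := (abs_re_le_norm _).trans (norm_inner_le_norm x y)
  have h := Real.rpow_mul_sq_sub_bounds (sub_pos.2 hp) (norm_nonneg x) (norm_nonneg y) hr
  rw [show p - 1 - 1 = p - 2 by ring, show -(p - 1) = 1 - p by ring] at h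
  rw [re_inner_sub_smul_sub_smul, norm_sub_sq (𝕜 := 𝕜)]
  constructor <;> linarith [h.1, h.2]

end InnerProductSpace

/-- Two-sided bound for `Re[(|ξ|^{p-2}ξ − |ζ|^{p-2}ζ)·(conj ξ − conj ζ)]`. -/
theorem stmt1 (n : ℕ) (p : ℝ) (hp : 1 < p) :
    ∃ c > (0 : ℝ), ∃ C > (0 : ℝ), ∀ ξ ζ : EuclideanSpace ℂ (Fin n),
      c * (‖ξ‖ + ‖ζ‖) ^ (p - 2) * ‖ξ - ζ‖ ^ 2 ≤
        (∑ j, (((‖ξ‖ ^ (p - 2) : ℝ) : ℂ) * ξ j - ((‖ζ‖ ^ (p - 2) : ℝ) : ℂ) * ζ j) *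
          (starRingEnd ℂ) (ξ j - ζ j)).re ∧
      (∑ j, (((‖ξ‖ ^ (p - 2) : ℝ) : ℂ) * ξ j - ((‖ζ‖ ^ (p - 2) : ℝ) : ℂ) * ζ j) *
          (starRingEnd ℂ) (ξ j - ζ j)).re ≤
        C * (‖ξ‖ + ‖ζ‖) ^ (p - 2) * ‖ξ - ζ‖ ^ 2 := by
  refine ⟨min 1 (p - 1) * 2 ^ (1 - p), mul_pos (lt_min one_pos (sub_pos.2 hp)) (by positivity),
    2 * max 1 (p - 1), by positivity, fun ξ ζ => ?_⟩
  have hsum (a b : ℝ) : ∑ j, ((a : ℂ) * ξ j - (b : ℂ) * ζ j) * (starRingEnd ℂ) (ξ j - ζ j) =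
      ⟪ξ - ζ, (a : ℂ) • ξ - (b : ℂ) • ζ⟫_ℂ := by
    refine Finset.sum_congr rfl fun j _ => ?_
    simp only [PiLp.sub_apply, PiLp.smul_apply, smul_eq_mul, RCLike.inner_apply]
  rw [hsum]
  exact re_inner_rpow_smul_sub_bounds (𝕜 := ℂ) hp ξ ζ
end

section
/- For all ξ, ζ ∈ ℂⁿ and every θ ∈ [0,1] with |ξ| ≤ |ζ|, one has | |ξ| |ζ| − ξ · conj(ζ) | ≤ 2^{2−θ} |ξ| |ζ|^{1−θ} |ξ − ζ|^{θ}. -/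
open scoped BigOperators

/-!
Put `a = ‖ξ‖`, `b = ‖ζ‖`, `d = ‖ξ - ζ‖`. The quantity `‖ab - ⟪ζ, ξ⟫‖` is at most `2ab` by
Cauchy–Schwarz, and at most `2ad` after writing `⟪ζ, ξ⟫ = a² - ⟪ξ - ζ, ξ⟫` and using
`b - a ≤ d`. Hence it is at most `2a · min b d ≤ 2a b^{1-θ} d^θ`.
-/

theorem Real.min_le_rpow_mul_rpow {b d θ : ℝ} (hb : 0 ≤ b) (hd : 0 ≤ d) (hθ0 : 0 ≤ θ)
    (hθ1 : θ ≤ 1) : min b d ≤ b ^ (1 - θ) * d ^ θ := by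
  have hm : 0 ≤ min b d := le_min hb hd
  calc min b d = min b d ^ (1 - θ) * min b d ^ θ := by
        rw [← Real.rpow_add' hm (by norm_num), sub_add_cancel, Real.rpow_one]
    _ ≤ b ^ (1 - θ) * d ^ θ := by
        gcongr
        · exact min_le_left b d
        · exact min_le_right b d

section InnerProductSpace

variable {𝕜 E : Type*} [RCLike 𝕜] [NormedAddCommGroup E] [InnerProductSpace 𝕜 E]

local notation "⟪" x ", " y "⟫" => inner 𝕜 x y

theorem norm_mul_norm_sub_inner_le_two_mul (x y : E) :
    ‖((‖x‖ * ‖y‖ : ℝ) : 𝕜) - ⟪y, x⟫‖ ≤ 2 * ‖x‖ * ‖y‖ := by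
  calc ‖((‖x‖ * ‖y‖ : ℝ) : 𝕜) - ⟪y, x⟫‖ ≤ ‖((‖x‖ * ‖y‖ : ℝ) : 𝕜)‖ + ‖⟪y, x⟫‖ := norm_sub_le _ _
    _ ≤ ‖x‖ * ‖y‖ + ‖y‖ * ‖x‖ := by
        rw [RCLike.norm_ofReal, abs_of_nonneg (by positivity)]
        gcongr
        exact norm_inner_le_norm y x
    _ = 2 * ‖x‖ * ‖y‖ := by ring

theorem norm_mul_norm_sub_inner_le_two_mul_norm_sub {x y : E} (h : ‖x‖ ≤ ‖y‖) :
    ‖((‖x‖ * ‖y‖ : ℝ) : 𝕜) - ⟪y, x⟫‖ ≤ 2 * ‖x‖ * ‖x - y‖ := by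
  have hsplit : ((‖x‖ * ‖y‖ : ℝ) : 𝕜) - ⟪y, x⟫ = ((‖x‖ * (‖y‖ - ‖x‖) : ℝ) : 𝕜) + ⟪x - y, x⟫ := by
    rw [inner_sub_left, inner_self_eq_norm_sq_to_K]
    push_cast
    ring
  have hgap : ‖y‖ - ‖x‖ ≤ ‖x - y‖ := norm_sub_rev x y ▸ norm_sub_norm_le y x
  calc ‖((‖x‖ * ‖y‖ : ℝ) : 𝕜) - ⟪y, x⟫‖
      ≤ ‖((‖x‖ * (‖y‖ - ‖x‖) : ℝ) : 𝕜)‖ + ‖⟪x - y, x⟫‖ := hsplit ▸ norm_add_le _ _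
    _ ≤ ‖x‖ * (‖y‖ - ‖x‖) + ‖x - y‖ * ‖x‖ := by
        rw [RCLike.norm_ofReal, abs_of_nonneg (mul_nonneg (norm_nonneg x) (sub_nonneg.2 h))]
        gcongr
        exact norm_inner_le_norm _ _
    _ ≤ 2 * ‖x‖ * ‖x - y‖ := by nlinarith [norm_nonneg x]

theorem norm_mul_norm_sub_inner_le_rpow {x y : E} (h : ‖x‖ ≤ ‖y‖) {θ : ℝ} (hθ0 : 0 ≤ θ)
    (hθ1 : θ ≤ 1) :
    ‖((‖x‖ * ‖y‖ : ℝ) : 𝕜) - ⟪y, x⟫‖ ≤ 2 * ‖x‖ * ‖y‖ ^ (1 - θ) * ‖x - y‖ ^ θ := by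
  calc ‖((‖x‖ * ‖y‖ : ℝ) : 𝕜) - ⟪y, x⟫‖ ≤ 2 * ‖x‖ * min ‖y‖ ‖x - y‖ := by
        rw [mul_min_of_nonneg _ _ (by positivity)]
        exact le_min (norm_mul_norm_sub_inner_le_two_mul x y)
          (norm_mul_norm_sub_inner_le_two_mul_norm_sub h)
    _ ≤ 2 * ‖x‖ * (‖y‖ ^ (1 - θ) * ‖x - y‖ ^ θ) := by
        gcongr
        exact Real.min_le_rpow_mul_rpow (norm_nonneg _) (norm_nonneg _) hθ0 hθ1
    _ = 2 * ‖x‖ * ‖y‖ ^ (1 - θ) * ‖x - y‖ ^ θ := by ring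

end InnerProductSpace

/-- `| |ξ||ζ| − ξ·conj ζ | ≤ 2^{2−θ} |ξ| |ζ|^{1−θ} |ξ−ζ|^θ` when `|ξ| ≤ |ζ|`, `θ ∈ [0,1]`. -/
theorem stmt5 (n : ℕ) (θ : ℝ) (hθ0 : 0 ≤ θ) (hθ1 : θ ≤ 1)
    (ξ ζ : EuclideanSpace ℂ (Fin n)) (h : ‖ξ‖ ≤ ‖ζ‖) :
    ‖((‖ξ‖ * ‖ζ‖ : ℝ) : ℂ) - ∑ j, ξ j * (starRingEnd ℂ) (ζ j)‖ ≤
      2 ^ (2 - θ) * ‖ξ‖ * ‖ζ‖ ^ (1 - θ) * ‖ξ - ζ‖ ^ θ := by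
  have hsum : ∑ j, ξ j * (starRingEnd ℂ) (ζ j) = inner ℂ ζ ξ := by
    simp [PiLp.inner_apply]
  have htwo : (2 : ℝ) ≤ 2 ^ (2 - θ) := by
    simpa using Real.rpow_le_rpow_of_exponent_le (x := 2) one_le_two (by linarith : 1 ≤ 2 - θ)
  rw [hsum]
  refine (norm_mul_norm_sub_inner_le_rpow h hθ0 hθ1).trans ?_
  gcongr
end

section
/- For all ξ, ζ ∈ ℂⁿ and every θ ∈ [0,1], one has | 2|ξ||ζ| − ξ·conj(ζ) − conj(ξ)·ζ | ≤ 2^{3−θ} min(|ξ|, |ζ|) · max(|ξ|, |ζ|)^{1−θ} · |ξ − ζ|^{θ}. -/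
open scoped BigOperators ComplexConjugate InnerProductSpace

/-! With `a = ‖ξ‖`, `b = ‖ζ‖`, `d = ‖ξ - ζ‖`, the quantity inside the absolute value is the real
number `2ab - 2 Re⟪ξ, ζ⟫ = d² - (a - b)² = (d - |a - b|)(d + |a - b|)`. Since `d - |a - b| ≤ a + b - |a - b|
= 2 min a b` and `|a - b| ≤ d`, it is at most `4 min a b · d`. Finally `d ≤ a + b ≤ 2 max a b`, so
`d = d^{1-θ} d^θ ≤ (2 max a b)^{1-θ} d^θ`. -/

theorem sq_sub_sq_le_four_mul_min_mul {a b d : ℝ} (hab : |a - b| ≤ d) (hd : d ≤ a + b) :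
    d ^ 2 - (a - b) ^ 2 ≤ 4 * min a b * d := by
  rcases le_total a b with h | h
  · rw [abs_of_nonpos (by linarith)] at hab
    rw [min_eq_left h]
    nlinarith
  · rw [abs_of_nonneg (by linarith)] at hab
    rw [min_eq_right h]
    nlinarith

section InnerProductSpace

variable {𝕜 E : Type*} [RCLike 𝕜] [NormedAddCommGroup E] [InnerProductSpace 𝕜 E]

theorem two_mul_norm_mul_norm_sub_two_mul_re_inner (x y : E) :
    2 * ‖x‖ * ‖y‖ - 2 * RCLike.re ⟪x, y⟫_𝕜 = ‖x - y‖ ^ 2 - (‖x‖ - ‖y‖) ^ 2 := by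
  rw [norm_sub_sq (𝕜 := 𝕜)]
  ring

theorem two_mul_norm_mul_norm_sub_two_mul_re_inner_le (x y : E) :
    2 * ‖x‖ * ‖y‖ - 2 * RCLike.re ⟪x, y⟫_𝕜 ≤ 4 * min ‖x‖ ‖y‖ * ‖x - y‖ := by
  rw [two_mul_norm_mul_norm_sub_two_mul_re_inner]
  exact sq_sub_sq_le_four_mul_min_mul (abs_norm_sub_norm_le x y) (norm_sub_le x y)

end InnerProductSpace

theorem EuclideanSpace.sum_conj_mul_eq_inner {𝕜 ι : Type*} [RCLike 𝕜] [Fintype ι]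
    (x y : EuclideanSpace 𝕜 ι) : ∑ j, conj (x j) * y j = ⟪x, y⟫_𝕜 := by
  simp [PiLp.inner_apply, mul_comm]

theorem EuclideanSpace.ofReal_sub_sum_mul_conj_sub_sum_conj_mul {ι : Type*} [Fintype ι] (c : ℝ)
    (x y : EuclideanSpace ℂ ι) :
    (c : ℂ) - ∑ j, x j * conj (y j) - ∑ j, conj (x j) * y j = ((c - 2 * (⟪x, y⟫_ℂ).re : ℝ) : ℂ) := by
  have hconj : ∑ j, x j * conj (y j) = conj ⟪x, y⟫_ℂ := by
    rw [← sum_conj_mul_eq_inner, map_sum]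
    simp [mul_comm]
  rw [hconj, ← sum_conj_mul_eq_inner, sub_sub, add_comm, Complex.add_conj]
  push_cast
  ring

theorem Real.self_le_rpow_one_sub_mul_rpow {d K θ : ℝ} (hd : 0 ≤ d) (hdK : d ≤ K) (hθ : θ ≤ 1) :
    d ≤ K ^ (1 - θ) * d ^ θ := by
  calc d = d ^ (1 - θ) * d ^ θ := by
        rw [← Real.rpow_add' hd (by norm_num), sub_add_cancel, Real.rpow_one]
    _ ≤ K ^ (1 - θ) * d ^ θ := by gcongr

theorem stmt6_general (n : ℕ) (θ : ℝ) (hθ1 : θ ≤ 1)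
    (ξ ζ : EuclideanSpace ℂ (Fin n)) :
    ‖(((2 * ‖ξ‖ * ‖ζ‖ : ℝ) : ℂ) - (∑ j, ξ j * (starRingEnd ℂ) (ζ j))
        - ∑ j, (starRingEnd ℂ) (ξ j) * ζ j)‖ ≤
      2 ^ (3 - θ) * min ‖ξ‖ ‖ζ‖ * max ‖ξ‖ ‖ζ‖ ^ (1 - θ) * ‖ξ - ζ‖ ^ θ := by
  have hre : 0 ≤ 2 * ‖ξ‖ * ‖ζ‖ - 2 * (⟪ξ, ζ⟫_ℂ).re := by
    linarith [RCLike.re_to_complex ▸ re_inner_le_norm (𝕜 := ℂ) ξ ζ]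
  have hd : ‖ξ - ζ‖ ≤ 2 * max ‖ξ‖ ‖ζ‖ :=
    (norm_sub_le ξ ζ).trans (by linarith [le_max_left ‖ξ‖ ‖ζ‖, le_max_right ‖ξ‖ ‖ζ‖])
  have hpow : (2 : ℝ) ^ (3 - θ) = 4 * 2 ^ (1 - θ) := by
    rw [show 3 - θ = 2 + (1 - θ) by ring, Real.rpow_add two_pos]
    norm_num
  rw [EuclideanSpace.ofReal_sub_sum_mul_conj_sub_sum_conj_mul, Complex.norm_real,
    Real.norm_eq_abs, abs_of_nonneg hre]
  calc _ ≤ 4 * min ‖ξ‖ ‖ζ‖ * ‖ξ - ζ‖ :=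
        two_mul_norm_mul_norm_sub_two_mul_re_inner_le (𝕜 := ℂ) ξ ζ
    _ ≤ 4 * min ‖ξ‖ ‖ζ‖ * ((2 * max ‖ξ‖ ‖ζ‖) ^ (1 - θ) * ‖ξ - ζ‖ ^ θ) := by
        gcongr
        exact Real.self_le_rpow_one_sub_mul_rpow (norm_nonneg _) hd hθ1
    _ = 2 ^ (3 - θ) * min ‖ξ‖ ‖ζ‖ * max ‖ξ‖ ‖ζ‖ ^ (1 - θ) * ‖ξ - ζ‖ ^ θ := by
        rw [Real.mul_rpow zero_le_two (le_max_of_le_left (norm_nonneg ξ)), hpow]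
        ring

/-- `| 2|ξ||ζ| − ξ·conj ζ − conj ξ·ζ | ≤ 2^{3−θ} min(|ξ|,|ζ|) max(|ξ|,|ζ|)^{1−θ} |ξ−ζ|^θ`. -/
theorem stmt6 (n : ℕ) (θ : ℝ) (hθ0 : 0 ≤ θ) (hθ1 : θ ≤ 1)
    (ξ ζ : EuclideanSpace ℂ (Fin n)) :
    ‖(((2 * ‖ξ‖ * ‖ζ‖ : ℝ) : ℂ) - (∑ j, ξ j * (starRingEnd ℂ) (ζ j))
        - ∑ j, (starRingEnd ℂ) (ξ j) * ζ j)‖ ≤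
      2 ^ (3 - θ) * min ‖ξ‖ ‖ζ‖ * max ‖ξ‖ ‖ζ‖ ^ (1 - θ) * ‖ξ - ζ‖ ^ θ :=
  stmt6_general n θ hθ1 ξ ζ
end

section
/- Let 2 < p < 3 and R > 0. For all ξ, ζ ∈ ℂⁿ with |ξ| < R and |ζ| < R, one has | |ξ|^{p−4} ξ·ξ − |ζ|^{p−4} ζ·ζ | ≤ C R^{(p−2)/2} ( |ξ − ζ|^{(p−2)/2} + R^{(p−2)/4} |ξ − ζ|^{(p−2)/4} ), for a constant C depending only on p and n. -/
/-!
`F(ξ) = |ξ|^(p-4) ξ·ξ` is homogeneous of degree `p - 2 ∈ [0, 1]` with `|F(ξ)| ≤ |ξ|^(p-2)`, and it is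
globally `(p - 2)`-Hölder: `|F(ξ) - F(ζ)| ≤ 4 |ξ - ζ|^(p-2)`. Say `|ζ| ≤ |ξ|`. If `|ξ| ≤ 2|ξ - ζ|`,
bound both values separately. Otherwise `|ξ - ζ| ≤ |ζ|`, and
`F(ξ) - F(ζ) = |ξ|^(p-4) (ξ·ξ - ζ·ζ) + (|ξ|^(p-4) - |ζ|^(p-4)) ζ·ζ` is controlled by Cauchy–Schwarz
and a mean value bound for `t ↦ t^(p-4)`. Since `|ξ - ζ| < 2R`, one factor `|ξ - ζ|^((p-2)/2)` of
`|ξ - ζ|^(p-2)` is at most `2 R^((p-2)/2)`.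
-/

namespace Real

lemma rpow_le_two_mul_rpow_of_le_two_mul {x y β : ℝ} (hx : 0 ≤ x) (hxy : x ≤ 2 * y)
    (hβ0 : 0 ≤ β) (hβ1 : β ≤ 1) : x ^ β ≤ 2 * y ^ β := by
  have hy : 0 ≤ y := by linarith
  have h2 : (2 : ℝ) ^ β ≤ 2 := by
    simpa using rpow_le_rpow_of_exponent_le one_le_two hβ1
  calc x ^ β ≤ (2 * y) ^ β := rpow_le_rpow hx hxy hβ0
    _ = 2 ^ β * y ^ β := mul_rpow zero_le_two hy
    _ ≤ 2 * y ^ β := by gcongr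

lemma rpow_sub_one_mul_le_rpow {x d α : ℝ} (hd : 0 ≤ d) (hdx : d ≤ x) (hα : α ≤ 1) :
    x ^ (α - 1) * d ≤ d ^ α := by
  rcases hd.eq_or_lt with rfl | hd
  · simpa using rpow_nonneg le_rfl α
  calc x ^ (α - 1) * d ≤ d ^ (α - 1) * d :=
        mul_le_mul_of_nonneg_right (rpow_le_rpow_of_nonpos hd hdx (by linarith)) hd.le
    _ = d ^ α := by rw [rpow_sub_one hd.ne', div_mul_cancel₀ _ hd.ne']

lemma rpow_sub_rpow_le_two_mul {a b r : ℝ} (hb : 0 < b) (hba : b ≤ a) (hr : -2 ≤ r) :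
    b ^ r - a ^ r ≤ 2 * b ^ (r - 1) * (a - b) := by
  have ha : 0 < a := hb.trans_le hba
  have hab : 0 ≤ a - b := by linarith
  -- with `t = b / a ≤ 1`: `b ^ r - a ^ r = b ^ r (1 - t ^ (-r)) ≤ b ^ r (1 - t ^ 2)`
  have hsq : (b / a) ^ (2 : ℝ) ≤ (b / a) ^ (-r) :=
    rpow_le_rpow_of_exponent_ge (by positivity) ((div_le_one ha).2 hba) (by linarith)
  have hsplit : a ^ r = b ^ r * (b / a) ^ (-r) := by
    rw [div_rpow hb.le ha.le, rpow_neg hb.le, rpow_neg ha.le]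
    field_simp
  calc b ^ r - a ^ r ≤ b ^ r * (1 - (b / a) ^ (2 : ℝ)) := by
        rw [hsplit]; nlinarith [rpow_pos_of_pos hb r]
    _ = b ^ r * ((a - b) * (a + b) / a ^ 2) := by
        rw [rpow_two]; field_simp; ring
    _ ≤ b ^ r * ((a - b) * 2 / b) := by
        refine mul_le_mul_of_nonneg_left ?_ (rpow_nonneg hb.le r)
        rw [div_le_div_iff₀ (by positivity) hb]
        have h : (a + b) * b ≤ a ^ 2 * 2 := by nlinarith
        nlinarith [mul_le_mul_of_nonneg_left h hab]
    _ = 2 * b ^ (r - 1) * (a - b) := by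
        rw [rpow_sub_one hb.ne']; ring

end Real

section BilinearSquare

variable {𝕜 ι : Type*} [RCLike 𝕜] [Fintype ι]

lemma norm_sum_mul_le (x y : EuclideanSpace 𝕜 ι) : ‖∑ j, x j * y j‖ ≤ ‖x‖ * ‖y‖ := by
  rw [EuclideanSpace.norm_eq, EuclideanSpace.norm_eq]
  calc ‖∑ j, x j * y j‖ ≤ ∑ j, ‖x j‖ * ‖y j‖ := by
        simpa only [norm_mul] using norm_sum_le Finset.univ fun j => x j * y j
    _ ≤ _ := Real.sum_mul_le_sqrt_mul_sqrt _ _ _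

lemma norm_sum_mul_self_sub_le (ξ ζ : EuclideanSpace 𝕜 ι) :
    ‖∑ j, ξ j * ξ j - ∑ j, ζ j * ζ j‖ ≤ ‖ξ - ζ‖ * (‖ξ‖ + ‖ζ‖) := by
  have hdecomp : ∑ j, ξ j * ξ j - ∑ j, ζ j * ζ j
      = ∑ j, (ξ - ζ) j * ξ j + ∑ j, ζ j * (ξ - ζ) j := by
    rw [← Finset.sum_add_distrib, ← Finset.sum_sub_distrib]
    refine Finset.sum_congr rfl fun j _ => ?_
    simp only [PiLp.sub_apply]
    ring
  calc ‖∑ j, ξ j * ξ j - ∑ j, ζ j * ζ j‖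
      ≤ ‖∑ j, (ξ - ζ) j * ξ j‖ + ‖∑ j, ζ j * (ξ - ζ) j‖ := hdecomp ▸ norm_add_le _ _
    _ ≤ ‖ξ - ζ‖ * ‖ξ‖ + ‖ζ‖ * ‖ξ - ζ‖ := add_le_add (norm_sum_mul_le _ _) (norm_sum_mul_le _ _)
    _ = ‖ξ - ζ‖ * (‖ξ‖ + ‖ζ‖) := by ring

end BilinearSquare

section RpowBilinSq

variable {ι : Type*} [Fintype ι] {p : ℝ}

noncomputable def rpowBilinSq (p : ℝ) (ξ : EuclideanSpace ℂ ι) : ℂ :=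
  ((‖ξ‖ ^ (p - 4) : ℝ) : ℂ) * ∑ j, ξ j * ξ j

lemma norm_rpowBilinSq_le (p : ℝ) (ξ : EuclideanSpace ℂ ι) :
    ‖rpowBilinSq p ξ‖ ≤ ‖ξ‖ ^ (p - 2) := by
  rcases (norm_nonneg ξ).eq_or_lt with h | h
  · simp [rpowBilinSq, norm_eq_zero.1 h.symm, Real.rpow_nonneg]
  rw [rpowBilinSq, norm_mul, Complex.norm_real, Real.norm_of_nonneg (by positivity)]
  calc ‖ξ‖ ^ (p - 4) * ‖∑ j, ξ j * ξ j‖ ≤ ‖ξ‖ ^ (p - 4) * (‖ξ‖ * ‖ξ‖) := by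
        gcongr; exact norm_sum_mul_le ξ ξ
    _ = ‖ξ‖ ^ (p - 2) := by
        rw [← mul_assoc, ← Real.rpow_add_one h.ne', ← Real.rpow_add_one h.ne']
        ring_nf

variable {ξ ζ : EuclideanSpace ℂ ι}

lemma norm_rpowBilinSq_sub_le_of_near (hp2 : 2 ≤ p) (hp3 : p ≤ 3) (hζξ : ‖ζ‖ ≤ ‖ξ‖)
    (hnear : ‖ξ‖ ≤ 2 * ‖ξ - ζ‖) :
    ‖rpowBilinSq p ξ - rpowBilinSq p ζ‖ ≤ 4 * ‖ξ - ζ‖ ^ (p - 2) := by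
  have hζ : ‖ζ‖ ^ (p - 2) ≤ ‖ξ‖ ^ (p - 2) :=
    Real.rpow_le_rpow (norm_nonneg _) hζξ (by linarith)
  have hξ : ‖ξ‖ ^ (p - 2) ≤ 2 * ‖ξ - ζ‖ ^ (p - 2) :=
    Real.rpow_le_two_mul_rpow_of_le_two_mul (norm_nonneg _) hnear (by linarith) (by linarith)
  calc ‖rpowBilinSq p ξ - rpowBilinSq p ζ‖
      ≤ ‖rpowBilinSq p ξ‖ + ‖rpowBilinSq p ζ‖ := norm_sub_le _ _
    _ ≤ ‖ξ‖ ^ (p - 2) + ‖ζ‖ ^ (p - 2) :=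
        add_le_add (norm_rpowBilinSq_le p ξ) (norm_rpowBilinSq_le p ζ)
    _ ≤ 4 * ‖ξ - ζ‖ ^ (p - 2) := by linarith

lemma norm_rpowBilinSq_sub_le_of_far (hp2 : 2 ≤ p) (hp3 : p ≤ 3) (hζξ : ‖ζ‖ ≤ ‖ξ‖)
    (hfar : 2 * ‖ξ - ζ‖ < ‖ξ‖) :
    ‖rpowBilinSq p ξ - rpowBilinSq p ζ‖ ≤ 4 * ‖ξ - ζ‖ ^ (p - 2) := by
  set a := ‖ξ‖
  set b := ‖ζ‖
  set d := ‖ξ - ζ‖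
  have hd : 0 ≤ d := norm_nonneg _
  have hab : a - b ≤ d := norm_sub_norm_le ξ ζ
  have ha : 0 < a := by linarith
  have hdb : d ≤ b := by linarith
  have hb : 0 < b := by linarith
  have hdecomp : rpowBilinSq p ξ - rpowBilinSq p ζ
      = ((a ^ (p - 4) : ℝ) : ℂ) * (∑ j, ξ j * ξ j - ∑ j, ζ j * ζ j) +
        ((a ^ (p - 4) - b ^ (p - 4) : ℝ) : ℂ) * ∑ j, ζ j * ζ j := by
    simp only [rpowBilinSq]; push_cast; ring
  have hξterm : ‖((a ^ (p - 4) : ℝ) : ℂ) * (∑ j, ξ j * ξ j - ∑ j, ζ j * ζ j)‖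
      ≤ 2 * d ^ (p - 2) := by
    rw [norm_mul, Complex.norm_real, Real.norm_of_nonneg (by positivity)]
    calc a ^ (p - 4) * ‖∑ j, ξ j * ξ j - ∑ j, ζ j * ζ j‖
        ≤ a ^ (p - 4) * (d * (a + a)) := by
          gcongr
          exact (norm_sum_mul_self_sub_le ξ ζ).trans (by gcongr)
      _ = 2 * (a ^ (p - 2 - 1) * d) := by
          rw [Real.rpow_sub_one ha.ne', show p - 2 = p - 4 + 1 + 1 by ring,
            Real.rpow_add_one ha.ne', Real.rpow_add_one ha.ne']
          field_simp
          ring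
      _ ≤ 2 * d ^ (p - 2) := by
          gcongr; exact Real.rpow_sub_one_mul_le_rpow hd (by linarith) (by linarith)
  have hζterm : ‖((a ^ (p - 4) - b ^ (p - 4) : ℝ) : ℂ) * ∑ j, ζ j * ζ j‖
      ≤ 2 * d ^ (p - 2) := by
    have hmono : a ^ (p - 4) ≤ b ^ (p - 4) := Real.rpow_le_rpow_of_nonpos hb hζξ (by linarith)
    rw [norm_mul, Complex.norm_real, Real.norm_eq_abs, abs_sub_comm,
      abs_of_nonneg (by linarith)]
    calc (b ^ (p - 4) - a ^ (p - 4)) * ‖∑ j, ζ j * ζ j‖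
        ≤ (2 * b ^ (p - 4 - 1) * (a - b)) * (b * b) := by
          gcongr
          · exact Real.rpow_sub_rpow_le_two_mul hb hζξ (by linarith)
          · exact norm_sum_mul_le ζ ζ
      _ = 2 * (b ^ (p - 2 - 1) * (a - b)) := by
          rw [show p - 2 - 1 = p - 4 - 1 + 1 + 1 by ring,
            Real.rpow_add_one hb.ne', Real.rpow_add_one hb.ne']
          ring
      _ ≤ 2 * (b ^ (p - 2 - 1) * d) := by gcongr
      _ ≤ 2 * d ^ (p - 2) := by
          gcongr; exact Real.rpow_sub_one_mul_le_rpow hd hdb (by linarith)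
  calc ‖rpowBilinSq p ξ - rpowBilinSq p ζ‖ ≤ 2 * d ^ (p - 2) + 2 * d ^ (p - 2) :=
        hdecomp ▸ (norm_add_le _ _).trans (add_le_add hξterm hζterm)
    _ = 4 * d ^ (p - 2) := by ring

theorem norm_rpowBilinSq_sub_le (hp2 : 2 ≤ p) (hp3 : p ≤ 3) (ξ ζ : EuclideanSpace ℂ ι) :
    ‖rpowBilinSq p ξ - rpowBilinSq p ζ‖ ≤ 4 * ‖ξ - ζ‖ ^ (p - 2) := by
  wlog hζξ : ‖ζ‖ ≤ ‖ξ‖ generalizing ξ ζ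
  · rw [norm_sub_rev, norm_sub_rev ξ]
    exact this ζ ξ (le_of_not_ge hζξ)
  rcases le_or_gt ‖ξ‖ (2 * ‖ξ - ζ‖) with hnear | hfar
  · exact norm_rpowBilinSq_sub_le_of_near hp2 hp3 hζξ hnear
  · exact norm_rpowBilinSq_sub_le_of_far hp2 hp3 hζξ hfar

end RpowBilinSq

/-- Estimate for `| |ξ|^{p−4} ξ·ξ − |ζ|^{p−4} ζ·ζ |`, `2 < p < 3`. -/
theorem stmt7 (n : ℕ) (p : ℝ) (hp2 : 2 < p) (hp3 : p < 3) :
    ∃ C > (0 : ℝ), ∀ R > (0 : ℝ),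
      ∀ ξ ζ : EuclideanSpace ℂ (Fin n), ‖ξ‖ < R → ‖ζ‖ < R →
        ‖(((‖ξ‖ ^ (p - 4) : ℝ) : ℂ) * ∑ j, ξ j * ξ j -
            ((‖ζ‖ ^ (p - 4) : ℝ) : ℂ) * ∑ j, ζ j * ζ j)‖ ≤
          C * R ^ ((p - 2) / 2) *
            (‖ξ - ζ‖ ^ ((p - 2) / 2) + R ^ ((p - 2) / 4) * ‖ξ - ζ‖ ^ ((p - 2) / 4)) := by
  refine ⟨8, by norm_num, fun R hR ξ ζ hξ hζ => ?_⟩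
  set d := ‖ξ - ζ‖
  have hd : 0 ≤ d := norm_nonneg _
  have hdR : d ≤ 2 * R := (norm_sub_le ξ ζ).trans (by linarith)
  have hdβ : d ^ ((p - 2) / 2) ≤ 2 * R ^ ((p - 2) / 2) :=
    Real.rpow_le_two_mul_rpow_of_le_two_mul hd hdR (by linarith) (by linarith)
  have hRβ : 0 ≤ R ^ ((p - 2) / 2) := by positivity
  have hsmall : 0 ≤ R ^ ((p - 2) / 4) * d ^ ((p - 2) / 4) := by positivity
  calc ‖rpowBilinSq p ξ - rpowBilinSq p ζ‖ ≤ 4 * d ^ (p - 2) :=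
        norm_rpowBilinSq_sub_le hp2.le hp3.le ξ ζ
    _ = 4 * d ^ ((p - 2) / 2) * d ^ ((p - 2) / 2) := by
        rw [mul_assoc, ← Real.rpow_add' hd (by linarith), add_halves]
    _ ≤ 4 * (2 * R ^ ((p - 2) / 2)) * d ^ ((p - 2) / 2) := by gcongr
    _ ≤ 8 * R ^ ((p - 2) / 2) *
          (d ^ ((p - 2) / 2) + R ^ ((p - 2) / 4) * d ^ ((p - 2) / 4)) := by
        nlinarith
end

section
/- Let p > 2, R > 0, and for ξ, ζ ∈ ℂⁿ with |ξ|, |ζ| < R define the n×n matrices A with entries A_{jk} = |ξ|^{p−4} ξⱼ conj(ξₖ) − |ζ|^{p−4} ζⱼ conj(ζₖ) and B with entries B_{jk} = |ξ|^{p−4} ξⱼ ξₖ − |ζ|^{p−4} ζⱼ ζₖ. Then for every symmetric complex n×n matrix H (Hᵀ = H), one has | tr(A H + B conj(H)) | ≤ C R^{μ} ‖H‖ |ξ − ζ|^{(1/4) min(p−2, 1)}, where ‖H‖ = max_{j,k} |H_{jk}| and C, μ > 0 depend only on p and n. -/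
/-!
Every entry of `A` and `B` has the form `a ^ q * x * y - b ^ q * u * v` with `q = p - 4`,
`a = |ξ|`, `b = |ζ|`, `x, y` coordinates of `ξ` (or their conjugates), `u, v` the matching ones
of `ζ`; all differences are at most `d = |ξ - ζ|`. Say `b ≤ a`. If `a ≤ 2d`, each term is at
most `a ^ (q + 2)`, and `a ^ (q + 2) ≤ 2 ^ α a ^ (q + 2 - α) d ^ α`. Otherwise `b ∈ [a/2, a]`,
where the mean value theorem for `t ↦ t ^ q` makes the expression Lipschitz with constant
`≲ a ^ (q + 1)`, and `a ^ (q + 1) d ≤ a ^ (q + 2 - α) d ^ α` because `d ≤ a` and `α ≤ 1`.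
The trace is a sum of `2 n²` such entries times entries of `H`.
-/

open Set

namespace Real

lemma rpow_le_two_rpow_abs_mul {a b : ℝ} (ha : 0 < a) (hab : a / 2 ≤ b) (hba : b ≤ a) (t : ℝ) :
    b ^ t ≤ 2 ^ |t| * a ^ t := by
  rcases le_or_gt 0 t with ht | ht
  · calc b ^ t ≤ a ^ t := rpow_le_rpow (by linarith) hba ht
      _ ≤ 2 ^ |t| * a ^ t :=
        le_mul_of_one_le_left (by positivity) (one_le_rpow (by norm_num) (abs_nonneg t))
  · calc b ^ t ≤ (a / 2) ^ t := rpow_le_rpow_of_nonpos (by linarith) hab ht.le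
      _ = 2 ^ |t| * a ^ t := by
        rw [div_rpow ha.le zero_le_two, abs_of_neg ht, rpow_neg zero_le_two, div_eq_inv_mul]

lemma abs_rpow_sub_rpow_le (q : ℝ) {a r s : ℝ} (ha : 0 < a) (hr : r ∈ Icc (a / 2) a)
    (hs : s ∈ Icc (a / 2) a) : |r ^ q - s ^ q| ≤ |q| * 2 ^ |q - 1| * a ^ (q - 1) * |r - s| := by
  have hderiv : ∀ x ∈ Icc (a / 2) a, HasDerivWithinAt (· ^ q) (q * x ^ (q - 1)) (Icc (a / 2) a) x :=
    fun x hx => (hasDerivAt_rpow_const (Or.inl (by linarith [hx.1]))).hasDerivWithinAt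
  have hbound : ∀ x ∈ Icc (a / 2) a, ‖q * x ^ (q - 1)‖ ≤ |q| * 2 ^ |q - 1| * a ^ (q - 1) := by
    intro x hx
    rw [norm_mul, norm_eq_abs, norm_of_nonneg (rpow_nonneg (by linarith [hx.1]) _), mul_assoc]
    exact mul_le_mul_of_nonneg_left (rpow_le_two_rpow_abs_mul ha hx.1 hx.2 _) (abs_nonneg q)
  simpa only [norm_eq_abs] using
    (convex_Icc _ _).norm_image_sub_le_of_norm_hasDerivWithin_le hderiv hbound hs hr

lemma rpow_sub_one_mul_le_rpow_sub_mul_rpow {a d α : ℝ} (β : ℝ) (ha : 0 < a) (hd : 0 ≤ d)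
    (hda : d ≤ a) (hα : α ≤ 1) : a ^ (β - 1) * d ≤ a ^ (β - α) * d ^ α := by
  calc a ^ (β - 1) * d = a ^ (β - 1) * (d ^ (1 - α) * d ^ α) := by
        rw [← rpow_add' hd (by norm_num), sub_add_cancel, rpow_one]
    _ ≤ a ^ (β - 1) * (a ^ (1 - α) * d ^ α) := by
        gcongr
    _ = a ^ (β - α) * d ^ α := by
        rw [← mul_assoc, ← rpow_add ha]
        ring_nf

lemma rpow_le_two_rpow_mul_rpow_sub_mul_rpow {a d α β : ℝ} (ha : 0 ≤ a) (had : a ≤ 2 * d)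
    (hα : 0 ≤ α) (hβ : β ≠ 0) : a ^ β ≤ 2 ^ α * a ^ (β - α) * d ^ α := by
  calc a ^ β = a ^ (β - α) * a ^ α := by rw [← rpow_add' ha (by simpa using hβ), sub_add_cancel]
    _ ≤ a ^ (β - α) * (2 * d) ^ α := by gcongr
    _ = 2 ^ α * a ^ (β - α) * d ^ α := by
        rw [mul_rpow zero_le_two (by linarith)]
        ring

end Real

namespace Complex

open Real

lemma norm_rpow_mul_mul_le (q : ℝ) {b : ℝ} (hb : 0 ≤ b) {u v : ℂ} (hu : ‖u‖ ≤ b)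
    (hv : ‖v‖ ≤ b) : ‖((b ^ q : ℝ) : ℂ) * u * v‖ ≤ b ^ (q + 2) := by
  rcases hb.eq_or_lt with rfl | hb
  · simp [norm_le_zero_iff.mp hu, Real.rpow_nonneg le_rfl]
  · rw [norm_mul, norm_mul, norm_real, Real.norm_of_nonneg (by positivity), rpow_add hb,
      rpow_two, sq, ← mul_assoc]
    gcongr

lemma norm_rpow_mul_mul_sub_le_of_half_le (q : ℝ) {a b d : ℝ} (ha : 0 < a)
    (hab : a / 2 ≤ b) (hba : b ≤ a) (hd : a - b ≤ d) {x y u v : ℂ} (hx : ‖x‖ ≤ a)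
    (hy : ‖y‖ ≤ a) (hu : ‖u‖ ≤ a) (hxu : ‖x - u‖ ≤ d) (hyv : ‖y - v‖ ≤ d) :
    ‖((a ^ q : ℝ) : ℂ) * x * y - ((b ^ q : ℝ) : ℂ) * u * v‖ ≤
      (|q| * 2 ^ |q - 1| + 2 * 2 ^ |q|) * a ^ (q + 1) * d := by
  have hb : 0 < b := by linarith
  have hd0 : 0 ≤ d := by linarith
  have hpow : |a ^ q - b ^ q| ≤ |q| * 2 ^ |q - 1| * a ^ (q - 1) * d := by
    refine (abs_rpow_sub_rpow_le q ha ⟨by linarith, le_rfl⟩ ⟨hab, hba⟩).trans ?_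
    rw [abs_of_nonneg (sub_nonneg.2 hba)]
    gcongr
  have hbq : b ^ q ≤ 2 ^ |q| * a ^ q := rpow_le_two_rpow_abs_mul ha hab hba q
  calc ‖((a ^ q : ℝ) : ℂ) * x * y - ((b ^ q : ℝ) : ℂ) * u * v‖
      = ‖((a ^ q - b ^ q : ℝ) : ℂ) * (x * y) + ((b ^ q : ℝ) : ℂ) * ((x - u) * y)
          + ((b ^ q : ℝ) : ℂ) * (u * (y - v))‖ := by
        congr 1
        push_cast
        ring
    _ ≤ |a ^ q - b ^ q| * (‖x‖ * ‖y‖) + b ^ q * (‖x - u‖ * ‖y‖) + b ^ q * (‖u‖ * ‖y - v‖) := by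
        refine (norm_add₃_le).trans_eq ?_
        simp only [norm_mul, norm_real, Real.norm_eq_abs, abs_of_pos (rpow_pos_of_pos hb q)]
    _ ≤ (|q| * 2 ^ |q - 1| * a ^ (q - 1) * d) * (a * a) + (2 ^ |q| * a ^ q) * (d * a)
          + (2 ^ |q| * a ^ q) * (a * d) := by
        gcongr
    _ = (|q| * 2 ^ |q - 1| + 2 * 2 ^ |q|) * a ^ (q + 1) * d := by
        rw [rpow_sub_one ha.ne', rpow_add_one ha.ne']
        field_simp
        ring

lemma norm_rpow_mul_mul_sub_le_of_le {q α : ℝ} (hq : 0 < q + 2) (hα0 : 0 < α)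
    (hα1 : α ≤ 1) {a b d : ℝ} (hb : 0 ≤ b) (hba : b ≤ a) (hd : |a - b| ≤ d) {x y u v : ℂ}
    (hx : ‖x‖ ≤ a) (hy : ‖y‖ ≤ a) (hu : ‖u‖ ≤ b) (hv : ‖v‖ ≤ b) (hxu : ‖x - u‖ ≤ d)
    (hyv : ‖y - v‖ ≤ d) :
    ‖((a ^ q : ℝ) : ℂ) * x * y - ((b ^ q : ℝ) : ℂ) * u * v‖ ≤
      (2 * 2 ^ α + (|q| * 2 ^ |q - 1| + 2 * 2 ^ |q|)) * a ^ (q + 2 - α) * d ^ α := by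
  have ha : 0 ≤ a := hb.trans hba
  have hd0 : 0 ≤ d := (abs_nonneg _).trans hd
  rw [abs_of_nonneg (sub_nonneg.2 hba)] at hd
  rcases le_or_gt a (2 * d) with hfar | hnear
  · calc ‖((a ^ q : ℝ) : ℂ) * x * y - ((b ^ q : ℝ) : ℂ) * u * v‖
        ≤ a ^ (q + 2) + b ^ (q + 2) :=
          (norm_sub_le _ _).trans (add_le_add (norm_rpow_mul_mul_le q ha hx hy)
            (norm_rpow_mul_mul_le q hb hu hv))
      _ ≤ 2 * a ^ (q + 2) := by linarith [rpow_le_rpow hb hba hq.le]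
      _ ≤ 2 * (2 ^ α * a ^ (q + 2 - α) * d ^ α) := by
          gcongr
          exact rpow_le_two_rpow_mul_rpow_sub_mul_rpow ha hfar hα0.le hq.ne'
      _ ≤ _ := by
          rw [← mul_assoc, ← mul_assoc]
          gcongr
          exact le_add_of_nonneg_right (by positivity)
  · have ha : 0 < a := by linarith
    calc ‖((a ^ q : ℝ) : ℂ) * x * y - ((b ^ q : ℝ) : ℂ) * u * v‖
        ≤ (|q| * 2 ^ |q - 1| + 2 * 2 ^ |q|) * a ^ (q + 1) * d :=
          norm_rpow_mul_mul_sub_le_of_half_le q ha (by linarith) hba hd hx hy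
            (hu.trans hba) hxu hyv
      _ ≤ (|q| * 2 ^ |q - 1| + 2 * 2 ^ |q|) * (a ^ (q + 2 - α) * d ^ α) := by
          rw [mul_assoc]
          refine mul_le_mul_of_nonneg_left ?_ (by positivity)
          simpa only [show q + 2 - 1 = q + 1 by ring] using
            rpow_sub_one_mul_le_rpow_sub_mul_rpow (q + 2) ha hd0 (by linarith) hα1
      _ ≤ _ := by
          rw [← mul_assoc]
          gcongr ?_ * _ * _
          exact le_add_of_nonneg_left (by positivity : (0 : ℝ) ≤ 2 * 2 ^ α)

lemma exists_norm_rpow_mul_mul_sub_le {q α : ℝ} (hq : 0 < q + 2) (hα0 : 0 < α)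
    (hα1 : α ≤ 1) (hαq : α ≤ q + 2) :
    ∃ C > 0, ∀ R a b d : ℝ, 0 ≤ a → 0 ≤ b → a ≤ R → b ≤ R → |a - b| ≤ d →
      ∀ x y u v : ℂ, ‖x‖ ≤ a → ‖y‖ ≤ a → ‖u‖ ≤ b → ‖v‖ ≤ b → ‖x - u‖ ≤ d → ‖y - v‖ ≤ d →
        ‖((a ^ q : ℝ) : ℂ) * x * y - ((b ^ q : ℝ) : ℂ) * u * v‖ ≤ C * R ^ (q + 2 - α) * d ^ α := by
  refine ⟨2 * 2 ^ α + (|q| * 2 ^ |q - 1| + 2 * 2 ^ |q|), by positivity, ?_⟩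
  intro R a b d ha hb haR hbR hd x y u v hx hy hu hv hxu hyv
  have hd0 : 0 ≤ d := (abs_nonneg _).trans hd
  rcases le_total b a with hba | hab
  · refine (norm_rpow_mul_mul_sub_le_of_le hq hα0 hα1 hb hba hd hx hy hu hv hxu hyv).trans ?_
    gcongr
  · rw [norm_sub_rev]
    refine (norm_rpow_mul_mul_sub_le_of_le hq hα0 hα1 ha hab (d := d) (by rwa [abs_sub_comm])
      hu hv hx hy (by rwa [norm_sub_rev]) (by rwa [norm_sub_rev])).trans ?_
    gcongr

end Complex

lemma Matrix.norm_trace_mul_le {ι R : Type*} [Fintype ι] [SeminormedRing R] {A B : Matrix ι ι R}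
    {a b : ℝ} (hA : ∀ i j, ‖A i j‖ ≤ a) (hB : ∀ i j, ‖B i j‖ ≤ b) :
    ‖(A * B).trace‖ ≤ Fintype.card ι ^ 2 * (a * b) := by
  calc ‖(A * B).trace‖ = ‖∑ i, ∑ j, A i j * B j i‖ := rfl
    _ ≤ ∑ i : ι, ∑ j : ι, a * b := by
        refine (norm_sum_le _ _).trans (Finset.sum_le_sum fun i _ => ?_)
        refine (norm_sum_le _ _).trans (Finset.sum_le_sum fun j _ => ?_)
        exact (norm_mul_le _ _).trans
          (mul_le_mul (hA i j) (hB j i) (norm_nonneg _) ((norm_nonneg _).trans (hA i j)))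
    _ = Fintype.card ι ^ 2 * (a * b) := by simp [sq, mul_assoc]

/-- Trace estimate: `|tr(AH + B conj H)| ≤ C R^μ ‖H‖ |ξ−ζ|^{(1/4) min(p−2,1)}`
for symmetric `H`, where `A, B` are built from `ξ, ζ` as in the paper. -/
theorem stmt8 (n : ℕ) (p : ℝ) (hp : 2 < p) :
    ∃ C > (0 : ℝ), ∃ μ > (0 : ℝ), ∀ R > (0 : ℝ),
      ∀ ξ ζ : EuclideanSpace ℂ (Fin n), ‖ξ‖ < R → ‖ζ‖ < R →
        ∀ H : Matrix (Fin n) (Fin n) ℂ, H.transpose = H →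
          ‖Matrix.trace
            ((Matrix.of fun j k => ((‖ξ‖ ^ (p - 4) : ℝ) : ℂ) * ξ j * (starRingEnd ℂ) (ξ k)
                - ((‖ζ‖ ^ (p - 4) : ℝ) : ℂ) * ζ j * (starRingEnd ℂ) (ζ k)) * H
              + (Matrix.of fun j k => ((‖ξ‖ ^ (p - 4) : ℝ) : ℂ) * ξ j * ξ k
                - ((‖ζ‖ ^ (p - 4) : ℝ) : ℂ) * ζ j * ζ k) * H.map (starRingEnd ℂ))‖ ≤
            C * R ^ μ * (⨆ j, ⨆ k, ‖H j k‖) *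
              ‖ξ - ζ‖ ^ ((1 / 4) * min (p - 2) 1) := by
  have hm0 : 0 < min (p - 2) 1 := lt_min (sub_pos.2 hp) one_pos
  have hm1 := min_le_right (p - 2) 1
  have hm2 := min_le_left (p - 2) 1
  obtain ⟨C, hC, hdiff⟩ := Complex.exists_norm_rpow_mul_mul_sub_le (q := p - 4)
    (α := (1 / 4) * min (p - 2) 1) (by linarith) (by linarith) (by linarith) (by linarith)
  refine ⟨(2 * n ^ 2 + 1) * C, by positivity, p - 4 + 2 - (1 / 4) * min (p - 2) 1,
    by linarith, ?_⟩
  intro R hR ξ ζ hξ hζ H _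
  set S := ⨆ j, ⨆ k, ‖H j k‖
  set M := C * R ^ (p - 4 + 2 - (1 / 4) * min (p - 2) 1) * ‖ξ - ζ‖ ^ ((1 / 4) * min (p - 2) 1)
  have hH : ∀ j k, ‖H j k‖ ≤ S := fun j k =>
    le_ciSup_of_le (Finite.bddAbove_range _) j
      (le_ciSup (f := fun k => ‖H j k‖) (Finite.bddAbove_range _) k)
  have hcoord : ∀ j, ‖ξ j - ζ j‖ ≤ ‖ξ - ζ‖ := fun j => by
    simpa using PiLp.norm_apply_le (ξ - ζ) j
  have hentry := hdiff R ‖ξ‖ ‖ζ‖ ‖ξ - ζ‖ (norm_nonneg _) (norm_nonneg _) hξ.le hζ.le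
    (abs_norm_sub_norm_le _ _)
  rw [Matrix.trace_add]
  refine (norm_add_le_of_le (Matrix.norm_trace_mul_le (a := M) (fun j k => ?_) hH)
    (Matrix.norm_trace_mul_le (a := M) (b := S) (fun j k => ?_) (fun j k => ?_))).trans ?_
  · simp only [Matrix.of_apply]
    refine hentry _ _ _ _ (PiLp.norm_apply_le ξ j) ?_ (PiLp.norm_apply_le ζ j) ?_ (hcoord j) ?_ <;>
      simp only [Complex.norm_conj, ← map_sub, PiLp.norm_apply_le, hcoord]
  · exact hentry _ _ _ _ (PiLp.norm_apply_le ξ j) (PiLp.norm_apply_le ξ k)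
      (PiLp.norm_apply_le ζ j) (PiLp.norm_apply_le ζ k) (hcoord j) (hcoord k)
  · simpa using hH j k
  · have hS : 0 ≤ S := Real.iSup_nonneg fun j => Real.iSup_nonneg fun k => norm_nonneg _
    have hMS : 0 ≤ M * S := by positivity
    simp only [Fintype.card_fin]
    nlinarith
end

section
/- Let n ≥ 2, p > 2, ξ, ζ ∈ ℂⁿ with |ξ|, |ζ| ≤ R. Define à = A − (2/n) tr(A) I and B̃ = B − (2/n) tr(B) I, where A_{jk} = |ξ|^{p−4} ξⱼ conj(ξₖ) − |ζ|^{p−4} ζⱼ conj(ζₖ) and B_{jk} = |ξ|^{p−4} ξⱼ ξₖ − |ζ|^{p−4} ζⱼ ζₖ. Then tr(à Ã*) = (|ξ|^{p−2} − |ζ|^{p−2})² + |ξ|^{p−4} |ζ|^{p−4} ( 2|ξ|²|ζ|² − 2|ξ · conj(ζ)|² ). -/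
open scoped Matrix

/-!
For the Frobenius inner product `⟪X, Y⟫ = tr (X Yᴴ)`, the map `M ↦ M - (2/n) tr(M) I` is the
reflection in the hyperplane of traceless matrices (the orthogonal complement of `I`), so it
preserves `tr (M Mᴴ)`. What remains is `tr (A Aᴴ)` for `A = a ξξ* - b ζζ*` with real `a, b`,
which expands into the Frobenius products `|ξ|⁴`, `|ζ|⁴`, `|ξ · conj ζ|²` of the two rank-one
matrices; finally `|x|^(p-4) |x|² = |x|^(p-2)`, which needs `p ≠ 2` only at `x = 0`.
-/

namespace Matrix

variable {ι 𝕜 R : Type*} [Fintype ι]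

theorem trace_sub_two_div_card_trace_smul_one_mul_conjTranspose [DecidableEq ι] [Field 𝕜]
    [StarRing 𝕜] (M : Matrix ι ι 𝕜) :
    trace ((M - (2 / (Fintype.card ι : 𝕜) * trace M) • 1) *
        (M - (2 / (Fintype.card ι : 𝕜) * trace M) • 1)ᴴ) = trace (M * Mᴴ) := by
  set N : 𝕜 := (Fintype.card ι : 𝕜)
  have hN : 2 / N * (2 / N) * N = 2 * (2 / N) := by
    rcases eq_or_ne N 0 with h | h
    · simp [h]
    · field_simp
  have hstar : star (2 / N) = 2 / N := by
    simp [N, star_div₀]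
  simp only [conjTranspose_sub, conjTranspose_smul, conjTranspose_one, sub_mul, mul_sub,
    smul_mul, Matrix.mul_smul, one_mul, mul_one, smul_smul, trace_sub, trace_smul, trace_one,
    trace_conjTranspose, smul_eq_mul, star_mul', hstar]
  linear_combination (trace M * star (trace M)) * hN

variable [CommRing R] [StarRing R]

theorem trace_vecMulVec_star_mul_vecMulVec_star (u v : ι → R) :
    trace (vecMulVec u (star u) * vecMulVec v (star v)) = (star u ⬝ᵥ v) * (star v ⬝ᵥ u) := by
  rw [vecMulVec_mul_vecMulVec, trace_vecMulVec, dotProduct_smul, smul_eq_mul,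
    dotProduct_comm u]

theorem trace_mul_conjTranspose_smul_vecMulVec_star_sub {a b : R} (ha : IsSelfAdjoint a)
    (hb : IsSelfAdjoint b) (u v : ι → R) :
    trace ((a • vecMulVec u (star u) - b • vecMulVec v (star v)) *
        (a • vecMulVec u (star u) - b • vecMulVec v (star v))ᴴ) =
      a ^ 2 * (star u ⬝ᵥ u) ^ 2 + b ^ 2 * (star v ⬝ᵥ v) ^ 2 -
        2 * a * b * ((star u ⬝ᵥ v) * (star v ⬝ᵥ u)) := by
  rw [conjTranspose_sub, conjTranspose_smul, conjTranspose_smul, conjTranspose_vecMulVec,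
    conjTranspose_vecMulVec, star_star, star_star, ha.star_eq, hb.star_eq]
  simp only [sub_mul, mul_sub, smul_mul, Matrix.mul_smul, trace_sub, trace_smul, smul_eq_mul,
    trace_vecMulVec_star_mul_vecMulVec_star]
  ring

end Matrix

theorem EuclideanSpace.star_ofLp_dotProduct_ofLp {ι 𝕜 : Type*} [Fintype ι] [RCLike 𝕜]
    (x : EuclideanSpace 𝕜 ι) : star (WithLp.ofLp x) ⬝ᵥ WithLp.ofLp x = ((‖x‖ ^ 2 : ℝ) : 𝕜) := by
  rw [dotProduct_comm, ← EuclideanSpace.inner_eq_star_dotProduct, inner_self_eq_norm_sq_to_K,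
    RCLike.ofReal_pow]

theorem EuclideanSpace.star_ofLp_dotProduct_mul_star_ofLp_dotProduct {ι 𝕜 : Type*} [Fintype ι]
    [RCLike 𝕜] (x y : EuclideanSpace 𝕜 ι) :
    star (WithLp.ofLp x) ⬝ᵥ WithLp.ofLp y * (star (WithLp.ofLp y) ⬝ᵥ WithLp.ofLp x) =
      ((‖inner 𝕜 y x‖ ^ 2 : ℝ) : 𝕜) := by
  rw [Matrix.star_dotProduct, dotProduct_comm (star _), ← EuclideanSpace.inner_eq_star_dotProduct,
    RCLike.ofReal_pow, ← RCLike.conj_mul]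
  rfl

theorem Real.rpow_sub_four_mul_sq {x : ℝ} (hx : 0 ≤ x) {p : ℝ} (hp : p ≠ 2) :
    x ^ (p - 4) * x ^ 2 = x ^ (p - 2) := by
  rw [← Real.rpow_two, ← Real.rpow_add' hx (by contrapose! hp; linarith)]
  ring_nf

theorem stmt9_general (n : ℕ) (p : ℝ) (hp : 2 < p)
    (ξ ζ : EuclideanSpace ℂ (Fin n)) :
    let A : Matrix (Fin n) (Fin n) ℂ :=
      Matrix.of fun j k => ((‖ξ‖ ^ (p - 4) : ℝ) : ℂ) * ξ j * (starRingEnd ℂ) (ξ k)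
        - ((‖ζ‖ ^ (p - 4) : ℝ) : ℂ) * ζ j * (starRingEnd ℂ) (ζ k)
    let At : Matrix (Fin n) (Fin n) ℂ := A - (((2 : ℂ) / n) * Matrix.trace A) • 1
    Matrix.trace (At * At.conjTranspose) =
      (((‖ξ‖ ^ (p - 2) - ‖ζ‖ ^ (p - 2)) ^ 2 +
        ‖ξ‖ ^ (p - 4) * ‖ζ‖ ^ (p - 4) *
          (2 * ‖ξ‖ ^ 2 * ‖ζ‖ ^ 2 -
            2 * ‖∑ j, ξ j * (starRingEnd ℂ) (ζ j)‖ ^ 2) : ℝ) : ℂ) := by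
  intro A At
  have hA : A =
      ((‖ξ‖ ^ (p - 4) : ℝ) : ℂ) • Matrix.vecMulVec (WithLp.ofLp ξ) (star (WithLp.ofLp ξ)) -
        ((‖ζ‖ ^ (p - 4) : ℝ) : ℂ) • Matrix.vecMulVec (WithLp.ofLp ζ) (star (WithLp.ofLp ζ)) := by
    ext j k
    simp [A, Matrix.vecMulVec_apply, mul_assoc]
  have hAt : Matrix.trace (At * At.conjTranspose) = Matrix.trace (A * A.conjTranspose) := by
    simpa only [Fintype.card_fin] using
      Matrix.trace_sub_two_div_card_trace_smul_one_mul_conjTranspose A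
  -- restated so that their casts are `Complex.ofReal`, not the `RCLike` cast `ring` would not match
  have hξ : star (WithLp.ofLp ξ) ⬝ᵥ WithLp.ofLp ξ = ((‖ξ‖ ^ 2 : ℝ) : ℂ) :=
    EuclideanSpace.star_ofLp_dotProduct_ofLp ξ
  have hζ : star (WithLp.ofLp ζ) ⬝ᵥ WithLp.ofLp ζ = ((‖ζ‖ ^ 2 : ℝ) : ℂ) :=
    EuclideanSpace.star_ofLp_dotProduct_ofLp ζ
  have hξζ : star (WithLp.ofLp ξ) ⬝ᵥ WithLp.ofLp ζ * (star (WithLp.ofLp ζ) ⬝ᵥ WithLp.ofLp ξ) =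
      ((‖∑ j, ξ j * (starRingEnd ℂ) (ζ j)‖ ^ 2 : ℝ) : ℂ) :=
    EuclideanSpace.star_ofLp_dotProduct_mul_star_ofLp_dotProduct ξ ζ
  rw [hAt, hA, Matrix.trace_mul_conjTranspose_smul_vecMulVec_star_sub (Complex.conj_ofReal _)
    (Complex.conj_ofReal _), hξ, hζ, hξζ, ← Real.rpow_sub_four_mul_sq (norm_nonneg _) hp.ne',
    ← Real.rpow_sub_four_mul_sq (norm_nonneg _) hp.ne']
  push_cast
  ring

/-- Formula for `tr(Ã Ã*)`, where `Ã = A − (2/n) tr(A) I`. -/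
theorem stmt9 (n : ℕ) (hn : 2 ≤ n) (p R : ℝ) (hp : 2 < p)
    (ξ ζ : EuclideanSpace ℂ (Fin n)) (hξ : ‖ξ‖ ≤ R) (hζ : ‖ζ‖ ≤ R) :
    let A : Matrix (Fin n) (Fin n) ℂ :=
      Matrix.of fun j k => ((‖ξ‖ ^ (p - 4) : ℝ) : ℂ) * ξ j * (starRingEnd ℂ) (ξ k)
        - ((‖ζ‖ ^ (p - 4) : ℝ) : ℂ) * ζ j * (starRingEnd ℂ) (ζ k)
    let At : Matrix (Fin n) (Fin n) ℂ := A - (((2 : ℂ) / n) * Matrix.trace A) • 1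
    Matrix.trace (At * At.conjTranspose) =
      (((‖ξ‖ ^ (p - 2) - ‖ζ‖ ^ (p - 2)) ^ 2 +
        ‖ξ‖ ^ (p - 4) * ‖ζ‖ ^ (p - 4) *
          (2 * ‖ξ‖ ^ 2 * ‖ζ‖ ^ 2 -
            2 * ‖∑ j, ξ j * (starRingEnd ℂ) (ζ j)‖ ^ 2) : ℝ) : ℂ) :=
  stmt9_general n p hp ξ ζ
end

section
/- Let n ≥ 2, p > 2, ξ, ζ ∈ ℂⁿ, and with B_{jk} = |ξ|^{p−4} ξⱼ ξₖ − |ζ|^{p−4} ζⱼ ζₖ and B̃ = B − (2/n) tr(B) I, one has tr(B̃ B̃*) = (|ξ|^{p−2} − |ζ|^{p−2})² + |ξ|^{p−4} |ζ|^{p−4} ( 2|ξ|²|ζ|² − (ξ·conj(ζ))² − (conj(ξ)·ζ)² ). -/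
/-!
Subtracting `(2/n) tr(B) I` does not change `tr(B B*)`: with `c = 2/n` and `τ = tr B`, the two cross
terms contribute `-2c|τ|²` and the scalar part `c²n|τ|²`, which cancel because `cn = 2`. For the
rank-two matrix `B = a ξξᵀ - c ζζᵀ` with real `a, c`, summing `|B_jk|²` over `j, k` factors into squares
of the sums `ξ·conj ξ = |ξ|²`, `ζ·conj ζ = |ζ|²`, `ξ·conj ζ` and `conj ξ·ζ`, and the formula follows from
`|x|^(p-2) = |x|^(p-4) |x|²`.
-/

open Matrix

namespace Matrix

variable {ι R : Type*} [Fintype ι]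

theorem trace_sub_two_div_card_smul_one_mul_conjTranspose [DecidableEq ι] [Field R] [StarRing R]
    (M : Matrix ι ι R) :
    let Mt := M - ((2 / Fintype.card ι : R) * trace M) • 1
    trace (Mt * Mtᴴ) = trace (M * Mᴴ) := by
  intro Mt
  have hstar : star ((2 / Fintype.card ι : R) * trace M)
      = (2 / Fintype.card ι : R) * star (trace M) := by
    rw [star_mul', star_div₀, star_ofNat, star_natCast]
  simp only [Mt, conjTranspose_sub, conjTranspose_smul, conjTranspose_one, sub_mul, mul_sub,
    Matrix.smul_mul, Matrix.mul_smul, Matrix.mul_one, Matrix.one_mul, trace_sub, trace_smul,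
    smul_smul, smul_eq_mul, trace_conjTranspose, trace_one, hstar]
  -- if the cardinality vanishes in `R`, then `2 / card ι = 0` and there is nothing to cancel
  rcases eq_or_ne (Fintype.card ι : R) 0 with h | h
  · simp [h]
  · field_simp
    ring

theorem trace_mul_conjTranspose_eq_sum [CommRing R] [StarRing R] (M : Matrix ι ι R) :
    trace (M * Mᴴ) = ∑ j, ∑ k, M j k * star (M j k) := by
  simp [trace, mul_apply]

theorem trace_mul_conjTranspose_of_sub_outer [CommRing R] [StarRing R] {a c : R}
    (ha : star a = a) (hc : star c = c) (x y : ι → R) :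
    let M : Matrix ι ι R := of fun j k => a * x j * x k - c * y j * y k
    trace (M * Mᴴ) = a ^ 2 * (x ⬝ᵥ star x) ^ 2 + c ^ 2 * (y ⬝ᵥ star y) ^ 2
      - a * c * ((x ⬝ᵥ star y) ^ 2 + (star x ⬝ᵥ y) ^ 2) := by
  intro M
  have hentry : ∀ j k, M j k * star (M j k) =
      a ^ 2 * (x j * star (x j) * (x k * star (x k)))
        + c ^ 2 * (y j * star (y j) * (y k * star (y k)))
        - a * c * (x j * star (y j) * (x k * star (y k))
          + star (x j) * y j * (star (x k) * y k)) := by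
    intro j k
    simp only [M, of_apply, star_sub, star_mul', ha, hc]
    ring
  simp only [trace_mul_conjTranspose_eq_sum, hentry, Finset.sum_add_distrib,
    Finset.sum_sub_distrib, ← Finset.mul_sum, dotProduct, Pi.star_apply, sq, Finset.sum_mul_sum]

end Matrix

theorem EuclideanSpace.ofReal_norm_sq_eq_dotProduct {ι 𝕜 : Type*} [Fintype ι] [RCLike 𝕜]
    (x : EuclideanSpace 𝕜 ι) :
    (‖x‖ : 𝕜) ^ 2 = x.ofLp ⬝ᵥ star x.ofLp := by
  rw [← inner_self_eq_norm_sq_to_K, EuclideanSpace.inner_eq_star_dotProduct, dotProduct_comm]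

theorem Real.rpow_sub_two_eq_mul_sq {x p : ℝ} (hx : 0 ≤ x) (hp : p ≠ 2) :
    x ^ (p - 2) = x ^ (p - 4) * x ^ 2 := by
  rw [← Real.rpow_two, ← Real.rpow_add' hx (by contrapose! hp; linarith)]
  ring_nf

theorem stmt10_general (n : ℕ) (p : ℝ) (hp : 2 < p)
    (ξ ζ : EuclideanSpace ℂ (Fin n)) :
    let B : Matrix (Fin n) (Fin n) ℂ :=
      Matrix.of fun j k => ((‖ξ‖ ^ (p - 4) : ℝ) : ℂ) * ξ j * ξ k
        - ((‖ζ‖ ^ (p - 4) : ℝ) : ℂ) * ζ j * ζ k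
    let Bt : Matrix (Fin n) (Fin n) ℂ := B - (((2 : ℂ) / n) * Matrix.trace B) • 1
    Matrix.trace (Bt * Bt.conjTranspose) =
      (((‖ξ‖ ^ (p - 2) - ‖ζ‖ ^ (p - 2)) ^ 2 : ℝ) : ℂ) +
        ((‖ξ‖ ^ (p - 4) * ‖ζ‖ ^ (p - 4) : ℝ) : ℂ) *
          (((2 * ‖ξ‖ ^ 2 * ‖ζ‖ ^ 2 : ℝ) : ℂ)
            - (∑ j, ξ j * (starRingEnd ℂ) (ζ j)) ^ 2
            - (∑ j, (starRingEnd ℂ) (ξ j) * ζ j) ^ 2) := by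
  intro B Bt
  have hcentre : trace (Bt * Btᴴ) = trace (B * Bᴴ) := by
    simpa only [Fintype.card_fin] using trace_sub_two_div_card_smul_one_mul_conjTranspose B
  rw [hcentre,
    trace_mul_conjTranspose_of_sub_outer (Complex.conj_ofReal _) (Complex.conj_ofReal _),
    ← EuclideanSpace.ofReal_norm_sq_eq_dotProduct, ← EuclideanSpace.ofReal_norm_sq_eq_dotProduct,
    Real.rpow_sub_two_eq_mul_sq (norm_nonneg ξ) hp.ne',
    Real.rpow_sub_two_eq_mul_sq (norm_nonneg ζ) hp.ne']
  simp only [dotProduct, Pi.star_apply, starRingEnd_apply, RCLike.ofReal_eq_complex_ofReal]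
  push_cast
  ring

/-- Formula for `tr(B̃ B̃*)`, where `B̃ = B − (2/n) tr(B) I`. -/
theorem stmt10 (n : ℕ) (hn : 2 ≤ n) (p : ℝ) (hp : 2 < p)
    (ξ ζ : EuclideanSpace ℂ (Fin n)) :
    let B : Matrix (Fin n) (Fin n) ℂ :=
      Matrix.of fun j k => ((‖ξ‖ ^ (p - 4) : ℝ) : ℂ) * ξ j * ξ k
        - ((‖ζ‖ ^ (p - 4) : ℝ) : ℂ) * ζ j * ζ k
    let Bt : Matrix (Fin n) (Fin n) ℂ := B - (((2 : ℂ) / n) * Matrix.trace B) • 1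
    Matrix.trace (Bt * Bt.conjTranspose) =
      (((‖ξ‖ ^ (p - 2) - ‖ζ‖ ^ (p - 2)) ^ 2 : ℝ) : ℂ) +
        ((‖ξ‖ ^ (p - 4) * ‖ζ‖ ^ (p - 4) : ℝ) : ℂ) *
          (((2 * ‖ξ‖ ^ 2 * ‖ζ‖ ^ 2 : ℝ) : ℂ)
            - (∑ j, ξ j * (starRingEnd ℂ) (ζ j)) ^ 2
            - (∑ j, (starRingEnd ℂ) (ξ j) * ζ j) ^ 2) :=
  stmt10_general n p hp ξ ζ
end

section
/- For all ξ, ζ ∈ ℂⁿ, one has | 4|ξ|²|ζ|² − (ξ·conj(ζ) + conj(ξ)·ζ)² | ≤ 2^{5−(p−2)/2} |ξ| |ζ| min(|ξ|, |ζ|) max(|ξ|, |ζ|)^{(4−p)/2} |ξ − ζ|^{(p−2)/2}, for any fixed p ∈ (2, 3). -/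
/-!
With `a = ‖x‖`, `b = ‖y‖`, `c = ‖x - y‖` and `r = re ⟪x, y⟫`, the left side is
`4 (ab - r)(ab + r)` with both factors nonnegative, and `ab + r ≤ 2ab`. The polarization identity
gives `2 (ab - r) = c² - |a - b|² = (c - |a - b|)(c + |a - b|) ≤ 2 min(a, b) · 2c`, while trivially
`ab - r ≤ 2ab = 2 min(a, b) max(a, b)`. Interpolating the two bounds,
`min(c, max(a, b)) ≤ c^θ max(a, b)^(1-θ)` with `θ = (p - 2)/2 ∈ [0, 1]`, and `16 ≤ 2^(5-θ)`.
-/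

open RCLike
open scoped InnerProductSpace ComplexConjugate

theorem Real.min_le_rpow_mul_rpow_s11 {x y θ : ℝ} (hx : 0 ≤ x) (hy : 0 ≤ y) (hθ₀ : 0 ≤ θ)
    (hθ₁ : θ ≤ 1) : min x y ≤ x ^ θ * y ^ (1 - θ) := by
  have hm : 0 ≤ min x y := le_min hx hy
  calc min x y = min x y ^ θ * min x y ^ (1 - θ) := by
        rw [← Real.rpow_add' hm (by norm_num), add_sub_cancel, Real.rpow_one]
    _ ≤ x ^ θ * y ^ (1 - θ) := by
        gcongr
        · exact min_le_left x y
        · exact min_le_right x y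

section InnerProductSpace

variable {𝕜 E : Type*} [RCLike 𝕜] [NormedAddCommGroup E] [InnerProductSpace 𝕜 E]

theorem abs_re_inner_le_norm (x y : E) : |re ⟪x, y⟫_𝕜| ≤ ‖x‖ * ‖y‖ :=
  (abs_re_le_norm _).trans (norm_inner_le_norm x y)

theorem norm_mul_norm_sub_re_inner_le_min_mul_norm_sub (x y : E) :
    ‖x‖ * ‖y‖ - re ⟪x, y⟫_𝕜 ≤ 2 * min ‖x‖ ‖y‖ * ‖x - y‖ := by
  set d := |‖x‖ - ‖y‖| with hd_def
  have hfactor : 2 * (‖x‖ * ‖y‖ - re ⟪x, y⟫_𝕜) = (‖x - y‖ - d) * (‖x - y‖ + d) := by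
    linear_combination sq_abs (‖x‖ - ‖y‖) - norm_sub_sq (𝕜 := 𝕜) x y
  have hd : d ≤ ‖x - y‖ := abs_norm_sub_norm_le x y
  have hle : ‖x - y‖ - d ≤ 2 * min ‖x‖ ‖y‖ := by
    have := norm_sub_le x y
    rcases le_total ‖x‖ ‖y‖ with h | h
    · rw [min_eq_left h, hd_def, abs_of_nonpos (sub_nonpos.2 h)]; linarith
    · rw [min_eq_right h, hd_def, abs_of_nonneg (sub_nonneg.2 h)]; linarith
  nlinarith [abs_nonneg (‖x‖ - ‖y‖)]

theorem norm_mul_norm_sub_re_inner_le_min_mul_max (x y : E) :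
    ‖x‖ * ‖y‖ - re ⟪x, y⟫_𝕜 ≤ 2 * min ‖x‖ ‖y‖ * max ‖x‖ ‖y‖ := by
  have := neg_le_of_abs_le (abs_re_inner_le_norm (𝕜 := 𝕜) x y)
  rw [mul_assoc, min_mul_max]
  linarith

theorem norm_mul_norm_sub_re_inner_le_min_mul_rpow_mul_rpow (x y : E) {θ : ℝ} (hθ₀ : 0 ≤ θ)
    (hθ₁ : θ ≤ 1) :
    ‖x‖ * ‖y‖ - re ⟪x, y⟫_𝕜 ≤ 2 * min ‖x‖ ‖y‖ * (‖x - y‖ ^ θ * max ‖x‖ ‖y‖ ^ (1 - θ)) := by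
  calc ‖x‖ * ‖y‖ - re ⟪x, y⟫_𝕜 ≤ 2 * min ‖x‖ ‖y‖ * min ‖x - y‖ (max ‖x‖ ‖y‖) := by
        rw [mul_min_of_nonneg _ _ (by positivity)]
        exact le_min (norm_mul_norm_sub_re_inner_le_min_mul_norm_sub x y)
          (norm_mul_norm_sub_re_inner_le_min_mul_max x y)
    _ ≤ _ := by
        gcongr
        exact Real.min_le_rpow_mul_rpow_s11 (norm_nonneg _) (by positivity) hθ₀ hθ₁

theorem abs_four_mul_sq_sub_sq_re_inner_le (x y : E) {θ : ℝ} (hθ₀ : 0 ≤ θ) (hθ₁ : θ ≤ 1) :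
    |4 * ‖x‖ ^ 2 * ‖y‖ ^ 2 - (2 * re ⟪x, y⟫_𝕜) ^ 2| ≤
      16 * ‖x‖ * ‖y‖ * min ‖x‖ ‖y‖ * max ‖x‖ ‖y‖ ^ (1 - θ) * ‖x - y‖ ^ θ := by
  have hr := abs_le.1 (abs_re_inner_le_norm (𝕜 := 𝕜) x y)
  have hD := norm_mul_norm_sub_re_inner_le_min_mul_rpow_mul_rpow (𝕜 := 𝕜) x y hθ₀ hθ₁
  have hfactor : 4 * ‖x‖ ^ 2 * ‖y‖ ^ 2 - (2 * re ⟪x, y⟫_𝕜) ^ 2 =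
      4 * (‖x‖ * ‖y‖ - re ⟪x, y⟫_𝕜) * (‖x‖ * ‖y‖ + re ⟪x, y⟫_𝕜) := by ring
  rw [hfactor, abs_of_nonneg (by nlinarith)]
  calc 4 * (‖x‖ * ‖y‖ - re ⟪x, y⟫_𝕜) * (‖x‖ * ‖y‖ + re ⟪x, y⟫_𝕜)
      ≤ 4 * (2 * min ‖x‖ ‖y‖ * (‖x - y‖ ^ θ * max ‖x‖ ‖y‖ ^ (1 - θ))) * (2 * (‖x‖ * ‖y‖)) := by
        gcongr <;> linarith
    _ = _ := by ring

end InnerProductSpace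

theorem EuclideanSpace.sum_mul_conj_add_sum_conj_mul {ι : Type*} [Fintype ι]
    (ξ ζ : EuclideanSpace ℂ ι) :
    (∑ j, ξ j * conj (ζ j)) + ∑ j, conj (ξ j) * ζ j = ((2 * (⟪ξ, ζ⟫_ℂ).re : ℝ) : ℂ) := by
  have h : ⟪ξ, ζ⟫_ℂ = ∑ j, conj (ξ j) * ζ j := by
    simp [PiLp.inner_apply, mul_comm]
  rw [← Complex.add_conj, h, map_sum, add_comm]
  simp only [map_mul, Complex.conj_conj, mul_comm]

theorem sixteen_le_two_rpow_five_sub {θ : ℝ} (hθ : θ ≤ 1) : (16 : ℝ) ≤ 2 ^ (5 - θ) := by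
  calc (16 : ℝ) = 2 ^ (4 : ℝ) := by norm_num
    _ ≤ 2 ^ (5 - θ) := Real.rpow_le_rpow_of_exponent_le one_le_two (by linarith)

/-- `| 4|ξ|²|ζ|² − (ξ·conj ζ + conj ξ·ζ)² | ≤ 2^{5−(p−2)/2} |ξ||ζ| min max^{(4−p)/2} |ξ−ζ|^{(p−2)/2}`. -/
theorem stmt11 (n : ℕ) (p : ℝ) (hp2 : 2 < p) (hp3 : p < 3)
    (ξ ζ : EuclideanSpace ℂ (Fin n)) :
    ‖(((4 * ‖ξ‖ ^ 2 * ‖ζ‖ ^ 2 : ℝ) : ℂ) -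
        ((∑ j, ξ j * (starRingEnd ℂ) (ζ j)) + ∑ j, (starRingEnd ℂ) (ξ j) * ζ j) ^ 2)‖ ≤
      2 ^ (5 - (p - 2) / 2) * ‖ξ‖ * ‖ζ‖ * min ‖ξ‖ ‖ζ‖ *
        max ‖ξ‖ ‖ζ‖ ^ ((4 - p) / 2) * ‖ξ - ζ‖ ^ ((p - 2) / 2) := by
  have hθ₀ : 0 ≤ (p - 2) / 2 := by linarith
  have hθ₁ : (p - 2) / 2 ≤ 1 := by linarith
  rw [EuclideanSpace.sum_mul_conj_add_sum_conj_mul, ← Complex.ofReal_pow, ← Complex.ofReal_sub,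
    Complex.norm_real, Real.norm_eq_abs, show (4 - p) / 2 = 1 - (p - 2) / 2 by ring]
  refine (abs_four_mul_sq_sub_sq_re_inner_le (𝕜 := ℂ) ξ ζ hθ₀ hθ₁).trans ?_
  gcongr
  exact sixteen_le_two_rpow_five_sub hθ₁
end
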